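/- arXiv:1010.4076 — 3 statements merged into one kernel-verified Lean document; each statement's English description precedes it below -/
import Mathlib

section
/- The operator Ř := τ ∘ R[N] on k^N ⊗ k^N satisfies the braid relation (Ř ⊗ id)(id ⊗ Ř)(Ř ⊗ id) = (id ⊗ Ř)(Ř ⊗ id)(id ⊗ Ř) as endomorphisms of k^N ⊗ k^N ⊗ k^N; equivalently, R[N] satisfies the quantum Yang–Baxter equation τ₁₂R₁₂τ₂₃R₂₃τ₁₂R₁₂ = τ₂₃R₂₃τ₁₂R₁₂τ₂₃R₂₃, where the subscripts indicate the pair of tensor factors acted upon. -/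
open Matrix

noncomputable section

/-- Coefficient matrix of the R-matrix `R[N]` on `k^N ⊗ k^N`: the entry in
row `(i,j)`, column `(s,t)` is `q^{δ_{ij}} δ_{is} δ_{jt} + (q-q⁻¹) θ(i-j) δ_{it} δ_{js}`,
where `θ(x) = 1` if `x > 0` and `0` otherwise. -/
def Rmat (k : Type) [Field k] (q : k) (N : ℕ) :
    Matrix (Fin N × Fin N) (Fin N × Fin N) k :=
  Matrix.of fun p r =>
    (if p.1 = p.2 then q else 1) * (if p = r then 1 else 0)
      + (q - q⁻¹) * ((if p.2 < p.1 then (1 : k) else 0) *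
          (if p.1 = r.2 ∧ p.2 = r.1 then 1 else 0))

/-- `Ř := τ ∘ R[N]`, the R-matrix composed with the tensor flip. -/
def Rcheck (k : Type) [Field k] (q : k) (N : ℕ) :
    Matrix (Fin N × Fin N) (Fin N × Fin N) k :=
  Matrix.of fun p r => Rmat k q N (p.2, p.1) r

/-- `M ⊗ id` acting on the first two factors of `k^N ⊗ k^N ⊗ k^N`. -/
def op12 (k : Type) [Field k] (N : ℕ)
    (M : Matrix (Fin N × Fin N) (Fin N × Fin N) k) :
    Matrix (Fin N × Fin N × Fin N) (Fin N × Fin N × Fin N) k :=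
  Matrix.of fun p r =>
    M (p.1, p.2.1) (r.1, r.2.1) * (if p.2.2 = r.2.2 then 1 else 0)

/-- `id ⊗ M` acting on the last two factors of `k^N ⊗ k^N ⊗ k^N`. -/
def op23 (k : Type) [Field k] (N : ℕ)
    (M : Matrix (Fin N × Fin N) (Fin N × Fin N) k) :
    Matrix (Fin N × Fin N × Fin N) (Fin N × Fin N × Fin N) k :=
  Matrix.of fun p r =>
    (if p.1 = r.1 then 1 else 0) * M p.2 r.2

lemma ite_and_mul (k : Type) [Field k] (A B : Prop) [Decidable A] [Decidable B] (x : k) :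
    (if A ∧ B then x else 0) = (if A then 1 else 0) * (if B then 1 else 0) * x := by
  split_ifs with h1 h2 h3 <;> simp_all

lemma Rcheck_apply (k : Type) [Field k] (q : k) (N : ℕ) (x y s t : Fin N) :
    Rcheck k q N (x,y) (s,t)
      = (if s = y then 1 else 0) * (if t = x then 1 else 0) * (if x = y then q else 1)
        + (q - q⁻¹) * ((if x < y then (1:k) else 0) * ((if s = x then 1 else 0) * (if t = y then 1 else 0))) := by
  simp only [Rcheck, Rmat, Matrix.of_apply, Prod.mk.injEq, Prod.ext_iff, ite_and_mul, eq_comm]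
  ring

lemma sum_pair (k : Type) [Field k] (q : k) (N : ℕ) (x y : Fin N) (g : Fin N → Fin N → k) :
    (∑ s, ∑ t, Rcheck k q N (x,y) (s,t) * g s t)
      = (if x = y then q else 1) * g y x
        + (q - q⁻¹) * ((if x < y then (1:k) else 0) * g x y) := by
  by_cases hxy : x = y <;> by_cases hlt : x < y <;>
    simp [Rcheck_apply, hxy, hlt, Finset.sum_mul, Finset.mul_sum, mul_ite, ite_mul, mul_zero,
      zero_mul, mul_one, one_mul, add_mul, Finset.sum_ite_eq, Finset.sum_ite_eq', mul_add,
      Finset.sum_add_distrib]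

lemma sum_fst (k : Type) [Field k] (q : k) (N : ℕ) (x y t : Fin N) (g : Fin N → k) :
    (∑ s, Rcheck k q N (x,y) (s,t) * g s)
      = (if t = x then 1 else 0) * (if x = y then q else 1) * g y
        + (q - q⁻¹) * ((if x < y then (1:k) else 0) * ((if t = y then 1 else 0) * g x)) := by
  by_cases hxy : x = y <;> by_cases hlt : x < y <;>
    simp [Rcheck_apply, hxy, hlt, Finset.sum_mul, Finset.mul_sum, mul_ite, ite_mul, mul_zero,
      zero_mul, mul_one, one_mul, add_mul, Finset.sum_ite_eq, Finset.sum_ite_eq', mul_add,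
      Finset.sum_add_distrib]

lemma sum_snd (k : Type) [Field k] (q : k) (N : ℕ) (x y s : Fin N) (g : Fin N → k) :
    (∑ t, Rcheck k q N (x,y) (s,t) * g t)
      = (if s = y then 1 else 0) * (if x = y then q else 1) * g x
        + (q - q⁻¹) * ((if x < y then (1:k) else 0) * ((if s = x then 1 else 0) * g y)) := by
  by_cases hxy : x = y <;> by_cases hlt : x < y <;>
    simp [Rcheck_apply, hxy, hlt, Finset.sum_mul, Finset.mul_sum, mul_ite, ite_mul, mul_zero,
      zero_mul, mul_one, one_mul, add_mul, Finset.sum_ite_eq, Finset.sum_ite_eq', mul_add,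
      Finset.sum_add_distrib]

lemma sum_rot (k : Type) [Field k] (N : ℕ) (f : Fin N → Fin N → Fin N → k) :
    (∑ x : Fin N, ∑ w : Fin N, ∑ v : Fin N, f v w x)
      = ∑ v : Fin N, ∑ w : Fin N, ∑ x : Fin N, f v w x := by
  rw [Finset.sum_comm]
  rw [show (∑ w : Fin N, ∑ x : Fin N, ∑ v : Fin N, f v w x)
      = ∑ w : Fin N, ∑ v : Fin N, ∑ x : Fin N, f v w x from
    Finset.sum_congr rfl fun w _ => Finset.sum_comm]
  rw [Finset.sum_comm]

lemma lhs_entry (k : Type) [Field k] (N : ℕ) (M : Matrix (Fin N × Fin N) (Fin N × Fin N) k)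
    (i j l a b c : Fin N) :
    (op12 k N M * op23 k N M * op12 k N M) (i,j,l) (a,b,c)
      = ∑ u, ∑ v, ∑ x, M (i,j) (u,v) * M (v,l) (x,c) * M (u,x) (a,b) := by
  simp only [Matrix.mul_apply, op12, op23, Matrix.of_apply, Fintype.sum_prod_type]
  simp [Finset.sum_mul, Finset.mul_sum, mul_ite, ite_mul, mul_zero, zero_mul, mul_one, one_mul,
    Finset.sum_ite_eq, Finset.sum_ite_eq']
  exact Finset.sum_congr rfl fun u _ => Finset.sum_comm

lemma rhs_entry (k : Type) [Field k] (N : ℕ) (M : Matrix (Fin N × Fin N) (Fin N × Fin N) k)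
    (i j l a b c : Fin N) :
    (op23 k N M * op12 k N M * op23 k N M) (i,j,l) (a,b,c)
      = ∑ v, ∑ w, ∑ x, M (j,l) (v,w) * M (i,v) (a,x) * M (x,w) (b,c) := by
  simp only [Matrix.mul_apply, op12, op23, Matrix.of_apply, Fintype.sum_prod_type]
  simp [Finset.sum_mul, Finset.mul_sum, mul_ite, ite_mul, mul_zero, zero_mul, mul_one, one_mul,
    Finset.sum_ite_eq, Finset.sum_ite_eq']
  exact sum_rot k N fun v w x => M (j,l) (v,w) * M (i,v) (a,x) * M (x,w) (b,c)


set_option maxHeartbeats 1600000 in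
lemma key (k : Type) [Field k] (q : k) (hq : q ≠ 0) (N : ℕ) (i j l a b c : Fin N) :
    (if i = j then q else 1) *
        (((if c = i then 1 else 0) * if i = l then q else 1) *
            ((((if a = l then 1 else 0) * if b = j then 1 else 0) * if j = l then q else 1) +
              (q - q⁻¹) * ((if j < l then 1 else 0) * ((if a = j then 1 else 0) * if b = l then 1 else 0))) +
          (q - q⁻¹) *
            ((if i < l then 1 else 0) *
              ((if c = l then 1 else 0) *
                ((((if a = i then 1 else 0) * if b = j then 1 else 0) * if j = i then q else 1) +
                  (q - q⁻¹) * ((if j < i then 1 else 0) * ((if a = j then 1 else 0) * if b = i then 1 else 0)))))) +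
      (q - q⁻¹) *
        ((if i < j then 1 else 0) *
          (((if c = j then 1 else 0) * if j = l then q else 1) *
              ((((if a = l then 1 else 0) * if b = i then 1 else 0) * if i = l then q else 1) +
                (q - q⁻¹) * ((if i < l then 1 else 0) * ((if a = i then 1 else 0) * if b = l then 1 else 0))) +
            (q - q⁻¹) *
              ((if j < l then 1 else 0) *
                ((if c = l then 1 else 0) *
                  ((((if a = j then 1 else 0) * if b = i then 1 else 0) * if i = j then q else 1) +
                    (q - q⁻¹) * ((if i < j then 1 else 0) * ((if a = i then 1 else 0) * if b = j then 1 else 0))))))) =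
    (if j = l then q else 1) *
        (((if a = l then 1 else 0) * if i = l then q else 1) *
            ((((if b = j then 1 else 0) * if c = i then 1 else 0) * if i = j then q else 1) +
              (q - q⁻¹) * ((if i < j then 1 else 0) * ((if b = i then 1 else 0) * if c = j then 1 else 0))) +
          (q - q⁻¹) *
            ((if i < l then 1 else 0) *
              ((if a = i then 1 else 0) *
                ((((if b = j then 1 else 0) * if c = l then 1 else 0) * if l = j then q else 1) +
                  (q - q⁻¹) * ((if l < j then 1 else 0) * ((if b = l then 1 else 0) * if c = j then 1 else 0)))))) +
      (q - q⁻¹) *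
        ((if j < l then 1 else 0) *
          (((if a = j then 1 else 0) * if i = j then q else 1) *
              ((((if b = l then 1 else 0) * if c = i then 1 else 0) * if i = l then q else 1) +
                (q - q⁻¹) * ((if i < l then 1 else 0) * ((if b = i then 1 else 0) * if c = l then 1 else 0))) +
            (q - q⁻¹) *
              ((if i < j then 1 else 0) *
                ((if a = i then 1 else 0) *
                  ((((if b = l then 1 else 0) * if c = j then 1 else 0) * if j = l then q else 1) +
                    (q - q⁻¹) * ((if j < l then 1 else 0) * ((if b = j then 1 else 0) * if c = l then 1 else 0))))))) := by
  rcases lt_trichotomy i j with hij|hij|hij <;>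
    rcases lt_trichotomy j l with hjl|hjl|hjl <;>
      rcases lt_trichotomy i l with hil|hil|hil <;>
  first
  | (exfalso; omega)
  | ((try simp only [hij, hjl, hil, lt_irrefl, if_true, if_false, eq_self_iff_true, ite_true, ite_false])
     try simp only [eq_false (show ¬ (i < j) by omega)]
     try simp only [eq_false (show ¬ (j < i) by omega)]
     try simp only [eq_false (show ¬ (j < l) by omega)]
     try simp only [eq_false (show ¬ (l < j) by omega)]
     try simp only [eq_false (show ¬ (i < l) by omega)]
     try simp only [eq_false (show ¬ (l < i) by omega)]
     try simp only [eq_false (show ¬ (i = j) by omega)]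
     try simp only [eq_false (show ¬ (j = i) by omega)]
     try simp only [eq_false (show ¬ (j = l) by omega)]
     try simp only [eq_false (show ¬ (l = j) by omega)]
     try simp only [eq_false (show ¬ (i = l) by omega)]
     try simp only [eq_false (show ¬ (l = i) by omega)]
     try simp only [eq_true (show (i < j) by omega)]
     try simp only [eq_true (show (j < i) by omega)]
     try simp only [eq_true (show (j < l) by omega)]
     try simp only [eq_true (show (l < j) by omega)]
     try simp only [eq_true (show (i < l) by omega)]
     try simp only [eq_true (show (l < i) by omega)]
     try simp only [if_true, if_false, ite_true, ite_false, mul_zero, zero_mul, mul_one, one_mul,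
       add_zero, zero_add]
     first
     | ring1
     | (field_simp; ring1)
     | (split_ifs <;> first | (exfalso; omega) | ring1 | (field_simp; ring1)))

set_option maxHeartbeats 800000 in
/-- The operator `Ř := τ ∘ R[N]` satisfies the braid relation
`(Ř ⊗ id)(id ⊗ Ř)(Ř ⊗ id) = (id ⊗ Ř)(Ř ⊗ id)(id ⊗ Ř)` on `k^N ⊗ k^N ⊗ k^N`;
equivalently, `R[N]` satisfies the quantum Yang–Baxter equation
`τ₁₂R₁₂ τ₂₃R₂₃ τ₁₂R₁₂ = τ₂₃R₂₃ τ₁₂R₁₂ τ₂₃R₂₃`. -/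
theorem braid_relation (k : Type) [Field k] (q : k) (hq : q ≠ 0)
    (N : ℕ) (hN : 1 ≤ N) :
    op12 k N (Rcheck k q N) * op23 k N (Rcheck k q N) * op12 k N (Rcheck k q N)
      = op23 k N (Rcheck k q N) * op12 k N (Rcheck k q N) * op23 k N (Rcheck k q N) := by
  ext ⟨i, j, l⟩ ⟨a, b, c⟩
  rw [lhs_entry, rhs_entry]
  simp only [mul_assoc, ← Finset.mul_sum]
  simp only [sum_pair]
  simp only [sum_fst, sum_snd]
  simp only [Rcheck_apply]
  exact key k q hq N i j l a b c
end
end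

section
/- Suppose in addition that g := 1 + (q − q^{−1})∂a is invertible in 𝒜, with inverse h. Then the pair a′ := ∂, ∂′ := −ah again satisfies the defining relation q^{−1}∂′a′ = qa′∂′ + 1. (This is the identity verified in the construction of the q-Fourier transform ℱ: 𝒟_q(e)° → 𝒟_q(e^∨)°, a ↦ ∂, ∂ ↦ −a g^{−1}, in the rank-one non-loop case.) -/
/-- Let `𝒜` be a unital associative `k`-algebra and `a, ∂ ∈ 𝒜` satisfy
`q⁻¹∂a = qa∂ + 1`.  Suppose `g := 1 + (q - q⁻¹)∂a` is invertible in `𝒜` with inverse `h`.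
Then the pair `a' := ∂`, `∂' := -a·h` again satisfies the defining relation
`q⁻¹∂'a' = qa'∂' + 1`.  (This is the identity verified in the construction of the
q-Fourier transform `ℱ : 𝒟_q(e)° → 𝒟_q(e^∨)°`, `a ↦ ∂`, `∂ ↦ -a g⁻¹`, in the rank-one
non-loop case.) -/
theorem rank_one_fourier_nonloop {k : Type} [Field k] (q : k) (hq : q ≠ 0)
    {𝒜 : Type} [Ring 𝒜] [Algebra k 𝒜] (a d h : 𝒜)
    (hrel : q⁻¹ • (d * a) = q • (a * d) + 1)
    (hinv₁ : (1 + (q - q⁻¹) • (d * a)) * h = 1)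
    (hinv₂ : h * (1 + (q - q⁻¹) • (d * a)) = 1) :
    q⁻¹ • ((-(a * h)) * d) = q • (d * (-(a * h))) + 1 := by
  have hq2 : q * q⁻¹ = 1 := mul_inv_cancel₀ hq
  have hda : d * a = (q * q) • (a * d) + q • (1 : 𝒜) := by
    have h1 := congrArg (fun x => q • x) hrel
    simp only [smul_smul, hq2, one_smul, smul_add, smul_smul] at h1
    simpa using h1
  have key : d * (1 + (q - q⁻¹) • (d * a)) =
      (q * q) • ((1 + (q - q⁻¹) • (d * a)) * d) := by
    simp only [mul_add, add_mul, mul_one, one_mul, mul_smul_comm, smul_mul_assoc, mul_assoc]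
    rw [hda]
    simp only [mul_add, mul_smul_comm, mul_one, smul_add, smul_smul]
    match_scalars <;> field_simp <;> ring
  have hd2 : h * d = (q * q) • (d * h) := by
    calc h * d = h * d * ((1 + (q - q⁻¹) • (d * a)) * h) := by rw [hinv₁, mul_one]
    _ = h * (d * (1 + (q - q⁻¹) • (d * a))) * h := by noncomm_ring
    _ = h * ((q * q) • ((1 + (q - q⁻¹) • (d * a)) * d)) * h := by rw [key]
    _ = (q * q) • (h * (1 + (q - q⁻¹) • (d * a)) * (d * h)) := by
        simp only [mul_smul_comm, smul_mul_assoc, mul_assoc]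
    _ = (q * q) • (d * h) := by rw [hinv₂, one_mul]
  have hX : (1 : 𝒜) = (q * q) • h + (q * q * q - q) • (a * (d * h)) := by
    rw [← hinv₁]
    simp only [add_mul, one_mul, smul_mul_assoc, mul_assoc, hda]
    simp only [add_mul, smul_mul_assoc, smul_add, smul_smul, one_mul]
    match_scalars <;> field_simp <;> ring
  have lhs : (-(a * h)) * d = -((q * q) • (a * (d * h))) := by
    rw [neg_mul, mul_assoc, hd2, mul_smul_comm]
  have rhs : d * (-(a * h)) = -((q * q) • (a * (d * h)) + q • h) := by
    rw [mul_neg, ← mul_assoc, hda]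
    simp only [add_mul, smul_mul_assoc, one_mul, mul_assoc]
  rw [lhs, rhs]
  rw [hX]
  match_scalars <;> field_simp <;> ring
end

section
/- Suppose in addition that g := I_m + (q − q^{−1})DA is invertible in Mat_m(𝒜). Then the pair A′ := D (an m × n matrix) and D′ := −A g^{−1} (an n × m matrix) satisfies the defining relations of the quantized edge algebra of the reversed edge, with tail dimension m and head dimension n: R[m] A′₂ A′₁ = A′₁ A′₂ R[n]₂₁; R[n] D′₂ D′₁ = D′₁ D′₂ R[m]₂₁; and D′₂ (R[m])^{−1} A′₁ = A′₁ R[n] D′₂ + τ′, where τ′: k^n ⊗ k^m → k^m ⊗ k^n is the flip. (This is the content of the q-Fourier transform ℱ: 𝒟_q(e)° → 𝒟_q(e^∨)°, A ↦ D, D ↦ −A g^{−1}, for a non-loop edge.) -/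
open Matrix Kronecker

noncomputable section

/-- The explicit inverse of `R[N]`:
`(R⁻¹)^{ij}_{st} = q^{-δ_{ij}} δ_{is} δ_{jt} - (q-q⁻¹) θ(i-j) δ_{it} δ_{js}`. -/
def RmatInv (k : Type) [Field k] (q : k) (N : ℕ) :
    Matrix (Fin N × Fin N) (Fin N × Fin N) k :=
  Matrix.of fun p r =>
    (if p.1 = p.2 then q⁻¹ else 1) * (if p = r then 1 else 0)
      - (q - q⁻¹) * ((if p.2 < p.1 then (1 : k) else 0) *
          (if p.1 = r.2 ∧ p.2 = r.1 then 1 else 0))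

variable (k : Type) [Field k] (𝒜 : Type) [Ring 𝒜] [Algebra k 𝒜]

/-- `R[N]` regarded as a matrix over the `k`-algebra `𝒜`. -/
def RA (q : k) (N : ℕ) : Matrix (Fin N × Fin N) (Fin N × Fin N) 𝒜 :=
  (Rmat k q N).map (algebraMap k 𝒜)

/-- `R[N]₂₁ := τ ∘ R[N] ∘ τ` regarded as a matrix over `𝒜`. -/
def RA21 (q : k) (N : ℕ) : Matrix (Fin N × Fin N) (Fin N × Fin N) 𝒜 :=
  Matrix.of fun p r => RA k 𝒜 q N (p.2, p.1) (r.2, r.1)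

/-- `(R[N])⁻¹` regarded as a matrix over `𝒜`. -/
def RAinv (q : k) (N : ℕ) : Matrix (Fin N × Fin N) (Fin N × Fin N) 𝒜 :=
  (RmatInv k q N).map (algebraMap k 𝒜)

/-- `(R[N]₂₁)⁻¹ = (R[N]⁻¹)₂₁` regarded as a matrix over `𝒜`. -/
def RAinv21 (q : k) (N : ℕ) : Matrix (Fin N × Fin N) (Fin N × Fin N) 𝒜 :=
  Matrix.of fun p r => RAinv k 𝒜 q N (p.2, p.1) (r.2, r.1)

/-- The flip `τ : k^m ⊗ k^n → k^n ⊗ k^m` as a matrix over `𝒜`. -/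
def flipA (m n : ℕ) : Matrix (Fin n × Fin m) (Fin m × Fin n) 𝒜 :=
  Matrix.of fun p r => if p.1 = r.2 ∧ p.2 = r.1 then 1 else 0

/-- The defining relations (M1), (M2), (M3) of the quantized edge algebra `𝒟_q(e)`
of the Kronecker quiver with tail dimension `n` and head dimension `m`, for an
`n × m` matrix `A` and an `m × n` matrix `D` over `𝒜`:
(M1) `R[n] A₂ A₁ = A₁ A₂ R[m]₂₁`, (M2) `R[m] D₂ D₁ = D₁ D₂ R[n]₂₁`,
(M3) `D₂ (R[n])⁻¹ A₁ = A₁ R[m] D₂ + τ`. -/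
def EdgeRel (q : k) {n m : ℕ}
    (A : Matrix (Fin n) (Fin m) 𝒜) (D : Matrix (Fin m) (Fin n) 𝒜) : Prop :=
  RA k 𝒜 q n * ((1 : Matrix (Fin n) (Fin n) 𝒜) ⊗ₖ A) * (A ⊗ₖ (1 : Matrix (Fin m) (Fin m) 𝒜))
      = (A ⊗ₖ (1 : Matrix (Fin n) (Fin n) 𝒜)) * ((1 : Matrix (Fin m) (Fin m) 𝒜) ⊗ₖ A)
          * RA21 k 𝒜 q m
    ∧ RA k 𝒜 q m * ((1 : Matrix (Fin m) (Fin m) 𝒜) ⊗ₖ D) * (D ⊗ₖ (1 : Matrix (Fin n) (Fin n) 𝒜))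
      = (D ⊗ₖ (1 : Matrix (Fin m) (Fin m) 𝒜)) * ((1 : Matrix (Fin n) (Fin n) 𝒜) ⊗ₖ D)
          * RA21 k 𝒜 q n
    ∧ ((1 : Matrix (Fin n) (Fin n) 𝒜) ⊗ₖ D) * RAinv k 𝒜 q n * (A ⊗ₖ (1 : Matrix (Fin n) (Fin n) 𝒜))
      = (A ⊗ₖ (1 : Matrix (Fin m) (Fin m) 𝒜)) * RA k 𝒜 q m * ((1 : Matrix (Fin m) (Fin m) 𝒜) ⊗ₖ D)
          + flipA 𝒜 m n

/-- The defining relations (L1), (L2), (L3) of the quantized loop edge algebra `𝒟_q(e)`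
at a vertex of dimension `N`, with `R := R[N]`:
(L1) `R₂₁ A₁ R A₂ = A₂ R₂₁ A₁ R`, (L2) `R₂₁ D₁ R D₂ = D₂ R₂₁ D₁ R`,
(L3) `R₂₁ D₁ R A₂ = A₂ R₂₁ D₁ R₂₁⁻¹`. -/
def LoopRel (q : k) {N : ℕ} (A D : Matrix (Fin N) (Fin N) 𝒜) : Prop :=
  RA21 k 𝒜 q N * (A ⊗ₖ (1 : Matrix (Fin N) (Fin N) 𝒜)) * RA k 𝒜 q N
        * ((1 : Matrix (Fin N) (Fin N) 𝒜) ⊗ₖ A)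
      = ((1 : Matrix (Fin N) (Fin N) 𝒜) ⊗ₖ A) * RA21 k 𝒜 q N
        * (A ⊗ₖ (1 : Matrix (Fin N) (Fin N) 𝒜)) * RA k 𝒜 q N
    ∧ RA21 k 𝒜 q N * (D ⊗ₖ (1 : Matrix (Fin N) (Fin N) 𝒜)) * RA k 𝒜 q N
        * ((1 : Matrix (Fin N) (Fin N) 𝒜) ⊗ₖ D)
      = ((1 : Matrix (Fin N) (Fin N) 𝒜) ⊗ₖ D) * RA21 k 𝒜 q N
        * (D ⊗ₖ (1 : Matrix (Fin N) (Fin N) 𝒜)) * RA k 𝒜 q N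
    ∧ RA21 k 𝒜 q N * (D ⊗ₖ (1 : Matrix (Fin N) (Fin N) 𝒜)) * RA k 𝒜 q N
        * ((1 : Matrix (Fin N) (Fin N) 𝒜) ⊗ₖ A)
      = ((1 : Matrix (Fin N) (Fin N) 𝒜) ⊗ₖ A) * RA21 k 𝒜 q N
        * (D ⊗ₖ (1 : Matrix (Fin N) (Fin N) 𝒜)) * RAinv21 k 𝒜 q N

/- ### Helpers -/

def Tmat (N : ℕ) : Matrix (Fin N × Fin N) (Fin N × Fin N) 𝒜 :=
  Matrix.of fun p r => if p.2 < p.1 ∧ p.1 = r.2 ∧ p.2 = r.1 then 1 else 0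

def dU (q : k) (N : ℕ) : (Fin N × Fin N) → 𝒜 :=
  fun p => if p.1 = p.2 then algebraMap k 𝒜 q else 1

def dL (q : k) (N : ℕ) : (Fin N × Fin N) → 𝒜 :=
  fun p => if p.1 = p.2 then algebraMap k 𝒜 q⁻¹ else 1

lemma RA_eq (q : k) (N : ℕ) :
    RA k 𝒜 q N = Matrix.diagonal (dU k 𝒜 q N) + (q - q⁻¹) • Tmat 𝒜 N := by
  ext ⟨i, j⟩ ⟨s, t⟩
  simp only [RA, Rmat, Tmat, dU, Matrix.map_apply, Matrix.of_apply, Matrix.add_apply,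
    Matrix.smul_apply, Matrix.diagonal_apply, map_add, _root_.map_mul, Prod.mk.injEq,
    Prod.ext_iff, Fin.lt_def, Fin.ext_iff]
  split_ifs <;> first
    | (exfalso; omega)
    | (simp [Algebra.algebraMap_eq_smul_one, smul_smul]; try module)

lemma RAinv_eq (q : k) (N : ℕ) :
    RAinv k 𝒜 q N = Matrix.diagonal (dL k 𝒜 q N) - (q - q⁻¹) • Tmat 𝒜 N := by
  ext ⟨i, j⟩ ⟨s, t⟩
  simp only [RAinv, RmatInv, Tmat, dL, Matrix.map_apply, Matrix.of_apply, Matrix.sub_apply,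
    Matrix.smul_apply, Matrix.diagonal_apply, map_sub, _root_.map_mul, Prod.mk.injEq,
    Prod.ext_iff, Fin.lt_def, Fin.ext_iff]
  split_ifs <;> first
    | (exfalso; omega)
    | (simp [Algebra.algebraMap_eq_smul_one, smul_smul]; try module)

lemma diagU_mul_diagL (q : k) (hq : q ≠ 0) (N : ℕ) :
    Matrix.diagonal (dU k 𝒜 q N) * Matrix.diagonal (dL k 𝒜 q N) = 1 := by
  rw [Matrix.diagonal_mul_diagonal]
  rw [show (fun i => dU k 𝒜 q N i * dL k 𝒜 q N i) = fun _ => (1 : 𝒜) from ?_, Matrix.diagonal_one]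
  funext p
  simp only [dU, dL]
  split_ifs <;> simp [← _root_.map_mul, mul_inv_cancel₀ hq]

lemma diagL_mul_diagU (q : k) (hq : q ≠ 0) (N : ℕ) :
    Matrix.diagonal (dL k 𝒜 q N) * Matrix.diagonal (dU k 𝒜 q N) = 1 := by
  rw [Matrix.diagonal_mul_diagonal]
  rw [show (fun i => dL k 𝒜 q N i * dU k 𝒜 q N i) = fun _ => (1 : 𝒜) from ?_, Matrix.diagonal_one]
  funext p
  simp only [dU, dL]
  split_ifs <;> simp [← _root_.map_mul, inv_mul_cancel₀ hq]

lemma T_mul_diagL (q : k) (N : ℕ) :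
    Tmat 𝒜 N * Matrix.diagonal (dL k 𝒜 q N) = Tmat 𝒜 N := by
  ext ⟨p1, p2⟩ ⟨r1, r2⟩
  rw [Matrix.mul_diagonal]
  simp only [Tmat, dL, Matrix.of_apply, Fin.lt_def, Fin.ext_iff]
  split_ifs <;> first | (exfalso; omega) | simp

lemma T_mul_diagU (q : k) (N : ℕ) :
    Tmat 𝒜 N * Matrix.diagonal (dU k 𝒜 q N) = Tmat 𝒜 N := by
  ext ⟨p1, p2⟩ ⟨r1, r2⟩
  rw [Matrix.mul_diagonal]
  simp only [Tmat, dU, Matrix.of_apply, Fin.lt_def, Fin.ext_iff]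
  split_ifs <;> first | (exfalso; omega) | simp

lemma diagL_mul_T (q : k) (N : ℕ) :
    Matrix.diagonal (dL k 𝒜 q N) * Tmat 𝒜 N = Tmat 𝒜 N := by
  ext ⟨p1, p2⟩ ⟨r1, r2⟩
  rw [Matrix.diagonal_mul]
  simp only [Tmat, dL, Matrix.of_apply, Fin.lt_def, Fin.ext_iff]
  split_ifs <;> first | (exfalso; omega) | simp

lemma diagU_mul_T (q : k) (N : ℕ) :
    Matrix.diagonal (dU k 𝒜 q N) * Tmat 𝒜 N = Tmat 𝒜 N := by
  ext ⟨p1, p2⟩ ⟨r1, r2⟩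
  rw [Matrix.diagonal_mul]
  simp only [Tmat, dU, Matrix.of_apply, Fin.lt_def, Fin.ext_iff]
  split_ifs <;> first | (exfalso; omega) | simp

lemma T_mul_T (N : ℕ) : Tmat 𝒜 N * Tmat 𝒜 N = 0 := by
  ext ⟨p1, p2⟩ ⟨r1, r2⟩
  rw [Matrix.mul_apply]
  rw [show (0 : Matrix (Fin N × Fin N) (Fin N × Fin N) 𝒜) (p1, p2) (r1, r2) = 0 from rfl]
  apply Finset.sum_eq_zero
  rintro ⟨u, v⟩ -
  simp only [Tmat, Matrix.of_apply, Fin.lt_def, Fin.ext_iff]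
  split_ifs <;> first | (exfalso; omega) | simp

lemma RA_mul_RAinv (q : k) (hq : q ≠ 0) (N : ℕ) :
    RA k 𝒜 q N * RAinv k 𝒜 q N = 1 := by
  rw [RA_eq, RAinv_eq]
  simp only [Matrix.add_mul, Matrix.mul_sub, Matrix.smul_mul, Matrix.mul_smul,
    diagU_mul_diagL k 𝒜 q hq, diagU_mul_T, T_mul_diagL, T_mul_T, smul_zero, sub_zero, add_zero, smul_sub]
  abel

lemma RAinv_mul_RA (q : k) (hq : q ≠ 0) (N : ℕ) :
    RAinv k 𝒜 q N * RA k 𝒜 q N = 1 := by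
  rw [RA_eq, RAinv_eq]
  simp only [Matrix.sub_mul, Matrix.mul_add, Matrix.smul_mul, Matrix.mul_smul,
    diagL_mul_diagU k 𝒜 q hq, diagL_mul_T, T_mul_diagU, T_mul_T, smul_zero, sub_zero, add_zero, smul_sub]
  abel

/- ### Swap machinery -/

def swp {R : Type*} {a b c d : Type*} (M : Matrix (a × b) (c × d) R) :
    Matrix (b × a) (d × c) R :=
  M.submatrix Prod.swap Prod.swap

lemma swp_mul {R : Type*} [NonUnitalNonAssocSemiring R] {a b c d e f : Type*}
    [Fintype c] [Fintype d]
    (M : Matrix (a × b) (c × d) R) (N : Matrix (c × d) (e × f) R) :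
    swp (M * N) = swp M * swp N :=
  (Matrix.submatrix_mul_equiv M N Prod.swap (Equiv.prodComm _ _) Prod.swap).symm

lemma swp_one {R : Type*} [DecidableEq a] [DecidableEq b] [Zero R] [One R] :
    swp (1 : Matrix (a × b) (a × b) R) = 1 :=
  Matrix.submatrix_one_equiv (Equiv.prodComm _ _)

lemma swp_add {R : Type*} [Add R] {a b c d : Type*}
    (M N : Matrix (a × b) (c × d) R) : swp (M + N) = swp M + swp N := rfl

lemma swp_smul {R : Type*} [SMul k R] {a b c d : Type*}
    (c' : k) (M : Matrix (a × b) (c × d) R) : swp (c' • M) = c' • swp M := rfl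

lemma swp_swp {R : Type*} {a b c d : Type*} (M : Matrix (a × b) (c × d) R) :
    swp (swp M) = M := rfl

lemma swp_kron_one {a b c : ℕ} (X : Matrix (Fin a) (Fin b) 𝒜) :
    swp (X ⊗ₖ (1 : Matrix (Fin c) (Fin c) 𝒜)) = (1 : Matrix (Fin c) (Fin c) 𝒜) ⊗ₖ X := by
  ext ⟨i, j⟩ ⟨s, t⟩
  simp only [swp, Matrix.submatrix_apply, Prod.swap_prod_mk, Matrix.kroneckerMap_apply,
    Matrix.one_apply]
  split_ifs <;> simp

lemma swp_one_kron {a b c : ℕ} (X : Matrix (Fin a) (Fin b) 𝒜) :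
    swp ((1 : Matrix (Fin c) (Fin c) 𝒜) ⊗ₖ X) = X ⊗ₖ (1 : Matrix (Fin c) (Fin c) 𝒜) := by
  ext ⟨i, j⟩ ⟨s, t⟩
  simp only [swp, Matrix.submatrix_apply, Prod.swap_prod_mk, Matrix.kroneckerMap_apply,
    Matrix.one_apply]
  split_ifs <;> simp

lemma swp_RA (q : k) (N : ℕ) : swp (RA k 𝒜 q N) = RA21 k 𝒜 q N := rfl

lemma swp_RAinv (q : k) (N : ℕ) : swp (RAinv k 𝒜 q N) = RAinv21 k 𝒜 q N := rfl

lemma swp_RA21 (q : k) (N : ℕ) : swp (RA21 k 𝒜 q N) = RA k 𝒜 q N := rfl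

lemma swp_RAinv21 (q : k) (N : ℕ) : swp (RAinv21 k 𝒜 q N) = RAinv k 𝒜 q N := rfl

lemma swp_flip (a b : ℕ) : swp (flipA 𝒜 a b) = flipA 𝒜 b a := by
  ext ⟨i, j⟩ ⟨s, t⟩
  simp only [swp, Matrix.submatrix_apply, Prod.swap_prod_mk, flipA, Matrix.of_apply]
  simp [and_comm]

lemma RA21_mul_RAinv21 (q : k) (hq : q ≠ 0) (N : ℕ) :
    RA21 k 𝒜 q N * RAinv21 k 𝒜 q N = 1 := by
  rw [← swp_RA, ← swp_RAinv, ← swp_mul, RA_mul_RAinv k 𝒜 q hq, swp_one]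

lemma RAinv21_mul_RA21 (q : k) (hq : q ≠ 0) (N : ℕ) :
    RAinv21 k 𝒜 q N * RA21 k 𝒜 q N = 1 := by
  rw [← swp_RA, ← swp_RAinv, ← swp_mul, RAinv_mul_RA k 𝒜 q hq, swp_one]

/- ### Flip lemmas -/

lemma flip_mul_apply {a b : ℕ} {X : Type*} [Fintype X]
    (M : Matrix (Fin a × Fin b) X 𝒜) (p : Fin b × Fin a) (r : X) :
    (flipA 𝒜 a b * M) p r = M (p.2, p.1) r := by
  rw [Matrix.mul_apply, Fintype.sum_prod_type]
  simp [flipA, ite_and, ite_mul]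

lemma mul_flip_apply {a b : ℕ} {X : Type*} [Fintype X]
    (M : Matrix X (Fin a × Fin b) 𝒜) (x : X) (p : Fin b × Fin a) :
    (M * flipA 𝒜 b a) x p = M x (p.2, p.1) := by
  rw [Matrix.mul_apply, Fintype.sum_prod_type]
  simp [flipA, ite_and, mul_ite]

lemma flip_mul_flip (a b : ℕ) : flipA 𝒜 a b * flipA 𝒜 b a = 1 := by
  ext p r
  rw [flip_mul_apply]
  simp only [flipA, Matrix.of_apply, Matrix.one_apply, Prod.ext_iff]
  simp [and_comm]

lemma flip_mul_swp {N : ℕ} (M : Matrix (Fin N × Fin N) (Fin N × Fin N) 𝒜) :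
    flipA 𝒜 N N * M = swp M * flipA 𝒜 N N := by
  ext p r
  rw [flip_mul_apply, mul_flip_apply]
  rfl

lemma Fleft {a b c : ℕ} (X : Matrix (Fin c) (Fin a) 𝒜) :
    flipA 𝒜 c b * (X ⊗ₖ (1 : Matrix (Fin b) (Fin b) 𝒜))
      = ((1 : Matrix (Fin b) (Fin b) 𝒜) ⊗ₖ X) * flipA 𝒜 a b := by
  ext p r
  rw [flip_mul_apply, mul_flip_apply]
  simp only [Matrix.kroneckerMap_apply, Matrix.one_apply]
  split_ifs <;> simp

lemma Fleft' {a b c : ℕ} (X : Matrix (Fin c) (Fin a) 𝒜) :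
    flipA 𝒜 b c * ((1 : Matrix (Fin b) (Fin b) 𝒜) ⊗ₖ X)
      = (X ⊗ₖ (1 : Matrix (Fin b) (Fin b) 𝒜)) * flipA 𝒜 b a := by
  ext p r
  rw [flip_mul_apply, mul_flip_apply]
  simp only [Matrix.kroneckerMap_apply, Matrix.one_apply]
  split_ifs <;> simp

/- ### Hecke relations -/

lemma hecke1 (q : k) (N : ℕ) :
    RA k 𝒜 q N = RAinv21 k 𝒜 q N + (q - q⁻¹) • flipA 𝒜 N N := by
  ext ⟨i, j⟩ ⟨s, t⟩
  simp only [RA, RAinv21, RAinv, Rmat, RmatInv, flipA, Matrix.map_apply, Matrix.of_apply,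
    Matrix.add_apply, Matrix.smul_apply, map_add, map_sub, _root_.map_mul,
    Prod.mk.injEq, Prod.ext_iff, Fin.lt_def, Fin.ext_iff]
  split_ifs <;> first
    | (exfalso; omega)
    | (simp [Algebra.algebraMap_eq_smul_one, smul_smul]; try module)

lemma hecke2 (q : k) (N : ℕ) :
    RA21 k 𝒜 q N = RAinv k 𝒜 q N + (q - q⁻¹) • flipA 𝒜 N N := by
  have h := congrArg swp (hecke1 k 𝒜 q N)
  rw [swp_RA, swp_add, swp_smul, swp_RAinv21, swp_flip] at h
  exact h

/- ### Kronecker helpers -/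

lemma one_kron_mul {a b c e : ℕ} (X : Matrix (Fin a) (Fin b) 𝒜) (Y : Matrix (Fin b) (Fin c) 𝒜) :
    ((1 : Matrix (Fin e) (Fin e) 𝒜) ⊗ₖ X) * ((1 : Matrix (Fin e) (Fin e) 𝒜) ⊗ₖ Y)
      = (1 : Matrix (Fin e) (Fin e) 𝒜) ⊗ₖ (X * Y) := by
  ext ⟨i, j⟩ ⟨s, t⟩
  rw [Matrix.mul_apply, Fintype.sum_prod_type]
  simp only [Matrix.kroneckerMap_apply, Matrix.one_apply, ite_mul, mul_ite, one_mul,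
    zero_mul, mul_zero, Matrix.mul_apply]
  simp [Finset.sum_ite_eq, Finset.mul_sum]

lemma kron_one_mul {a b c e : ℕ} (X : Matrix (Fin a) (Fin b) 𝒜) (Y : Matrix (Fin b) (Fin c) 𝒜) :
    (X ⊗ₖ (1 : Matrix (Fin e) (Fin e) 𝒜)) * (Y ⊗ₖ (1 : Matrix (Fin e) (Fin e) 𝒜))
      = (X * Y) ⊗ₖ (1 : Matrix (Fin e) (Fin e) 𝒜) := by
  ext ⟨i, j⟩ ⟨s, t⟩
  rw [Matrix.mul_apply, Fintype.sum_prod_type]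
  simp only [Matrix.kroneckerMap_apply, Matrix.one_apply, ite_mul, mul_ite, one_mul,
    zero_mul, mul_zero, Matrix.mul_apply]
  simp [Finset.sum_ite_eq, Finset.sum_mul]

lemma kron_one_mul_one_kron {a b c d : ℕ}
    (X : Matrix (Fin a) (Fin b) 𝒜) (Y : Matrix (Fin c) (Fin d) 𝒜) :
    (X ⊗ₖ (1 : Matrix (Fin c) (Fin c) 𝒜)) * ((1 : Matrix (Fin b) (Fin b) 𝒜) ⊗ₖ Y)
      = X ⊗ₖ Y := by
  ext ⟨i, j⟩ ⟨s, t⟩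
  rw [Matrix.mul_apply, Fintype.sum_prod_type]
  simp only [Matrix.kroneckerMap_apply, Matrix.one_apply, ite_mul, mul_ite, one_mul,
    zero_mul, mul_zero]
  simp [Finset.sum_ite_eq]

lemma one_kron_add {a b c : ℕ} (X Y : Matrix (Fin a) (Fin b) 𝒜) :
    (1 : Matrix (Fin c) (Fin c) 𝒜) ⊗ₖ (X + Y)
      = (1 : Matrix (Fin c) (Fin c) 𝒜) ⊗ₖ X + (1 : Matrix (Fin c) (Fin c) 𝒜) ⊗ₖ Y :=
  Matrix.kronecker_add _ _ _

lemma kron_one_add {a b c : ℕ} (X Y : Matrix (Fin a) (Fin b) 𝒜) :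
    (X + Y) ⊗ₖ (1 : Matrix (Fin c) (Fin c) 𝒜)
      = X ⊗ₖ (1 : Matrix (Fin c) (Fin c) 𝒜) + Y ⊗ₖ (1 : Matrix (Fin c) (Fin c) 𝒜) :=
  Matrix.add_kronecker _ _ _

lemma one_kron_smul {a b c : ℕ} (r : k) (X : Matrix (Fin a) (Fin b) 𝒜) :
    (1 : Matrix (Fin c) (Fin c) 𝒜) ⊗ₖ (r • X)
      = r • ((1 : Matrix (Fin c) (Fin c) 𝒜) ⊗ₖ X) := by
  ext ⟨i, j⟩ ⟨s, t⟩
  simp [Matrix.kroneckerMap_apply, Matrix.one_apply, mul_smul_comm]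

lemma kron_one_smul {a b c : ℕ} (r : k) (X : Matrix (Fin a) (Fin b) 𝒜) :
    (r • X) ⊗ₖ (1 : Matrix (Fin c) (Fin c) 𝒜)
      = r • (X ⊗ₖ (1 : Matrix (Fin c) (Fin c) 𝒜)) := by
  ext ⟨i, j⟩ ⟨s, t⟩
  simp [Matrix.kroneckerMap_apply, Matrix.one_apply, smul_mul_assoc]

lemma one_kron_neg {a b c : ℕ} (X : Matrix (Fin a) (Fin b) 𝒜) :
    (1 : Matrix (Fin c) (Fin c) 𝒜) ⊗ₖ (-X) = -((1 : Matrix (Fin c) (Fin c) 𝒜) ⊗ₖ X) := by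
  ext ⟨i, j⟩ ⟨s, t⟩
  simp [Matrix.kroneckerMap_apply, mul_neg]

lemma kron_one_neg {a b c : ℕ} (X : Matrix (Fin a) (Fin b) 𝒜) :
    (-X) ⊗ₖ (1 : Matrix (Fin c) (Fin c) 𝒜) = -(X ⊗ₖ (1 : Matrix (Fin c) (Fin c) 𝒜)) := by
  ext ⟨i, j⟩ ⟨s, t⟩
  simp [Matrix.kroneckerMap_apply, neg_mul]

lemma one_kron_one {a c : ℕ} :
    (1 : Matrix (Fin c) (Fin c) 𝒜) ⊗ₖ (1 : Matrix (Fin a) (Fin a) 𝒜) = 1 :=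
  Matrix.one_kronecker_one

/- ### Main section -/

section Main

variable (q : k) {n m : ℕ}
variable (A : Matrix (Fin n) (Fin m) 𝒜) (D : Matrix (Fin m) (Fin n) 𝒜)

-- abbreviations for the three defining relations
def M1 : Prop :=
  RA k 𝒜 q n * ((1 : Matrix (Fin n) (Fin n) 𝒜) ⊗ₖ A) * (A ⊗ₖ (1 : Matrix (Fin m) (Fin m) 𝒜))
    = (A ⊗ₖ (1 : Matrix (Fin n) (Fin n) 𝒜)) * ((1 : Matrix (Fin m) (Fin m) 𝒜) ⊗ₖ A)
        * RA21 k 𝒜 q m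

def M2 : Prop :=
  RA k 𝒜 q m * ((1 : Matrix (Fin m) (Fin m) 𝒜) ⊗ₖ D) * (D ⊗ₖ (1 : Matrix (Fin n) (Fin n) 𝒜))
    = (D ⊗ₖ (1 : Matrix (Fin m) (Fin m) 𝒜)) * ((1 : Matrix (Fin n) (Fin n) 𝒜) ⊗ₖ D)
        * RA21 k 𝒜 q n

def M3 : Prop :=
  ((1 : Matrix (Fin n) (Fin n) 𝒜) ⊗ₖ D) * RAinv k 𝒜 q n * (A ⊗ₖ (1 : Matrix (Fin n) (Fin n) 𝒜))
    = (A ⊗ₖ (1 : Matrix (Fin m) (Fin m) 𝒜)) * RA k 𝒜 q m * ((1 : Matrix (Fin m) (Fin m) 𝒜) ⊗ₖ D)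
        + flipA 𝒜 m n

-- swapped versions
lemma M1swap (h : M1 k 𝒜 q A) :
    RA21 k 𝒜 q n * (A ⊗ₖ (1 : Matrix (Fin n) (Fin n) 𝒜))
        * ((1 : Matrix (Fin m) (Fin m) 𝒜) ⊗ₖ A)
      = ((1 : Matrix (Fin n) (Fin n) 𝒜) ⊗ₖ A) * (A ⊗ₖ (1 : Matrix (Fin m) (Fin m) 𝒜))
        * RA k 𝒜 q m := by
  have e := congrArg swp h
  simp only [swp_mul, swp_kron_one, swp_one_kron, swp_RA, swp_RA21] at e
  exact e

lemma M2swap (h : M2 k 𝒜 q D) :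
    RA21 k 𝒜 q m * (D ⊗ₖ (1 : Matrix (Fin m) (Fin m) 𝒜))
        * ((1 : Matrix (Fin n) (Fin n) 𝒜) ⊗ₖ D)
      = ((1 : Matrix (Fin m) (Fin m) 𝒜) ⊗ₖ D) * (D ⊗ₖ (1 : Matrix (Fin n) (Fin n) 𝒜))
        * RA k 𝒜 q n := by
  have e := congrArg swp h
  simp only [swp_mul, swp_kron_one, swp_one_kron, swp_RA, swp_RA21] at e
  exact e

lemma M3swap (h : M3 k 𝒜 q A D) :
    (D ⊗ₖ (1 : Matrix (Fin n) (Fin n) 𝒜)) * RAinv21 k 𝒜 q n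
        * ((1 : Matrix (Fin n) (Fin n) 𝒜) ⊗ₖ A)
      = ((1 : Matrix (Fin m) (Fin m) 𝒜) ⊗ₖ A) * RA21 k 𝒜 q m
        * (D ⊗ₖ (1 : Matrix (Fin m) (Fin m) 𝒜)) + flipA 𝒜 n m := by
  have e := congrArg swp h
  simp only [swp_mul, swp_add, swp_kron_one, swp_one_kron, swp_RA, swp_RA21,
    swp_RAinv, swp_RAinv21, swp_flip] at e
  exact e

lemma aux1 (hq : q ≠ 0) (m1 : M1 k 𝒜 q A) :
    (A ⊗ₖ (1 : Matrix (Fin n) (Fin n) 𝒜)) * ((1 : Matrix (Fin m) (Fin m) 𝒜) ⊗ₖ A)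
      = RA k 𝒜 q n * (((1 : Matrix (Fin n) (Fin n) 𝒜) ⊗ₖ A)
          * ((A ⊗ₖ (1 : Matrix (Fin m) (Fin m) 𝒜)) * RAinv21 k 𝒜 q m)) := by
  have e := congrArg (fun M => M * RAinv21 k 𝒜 q m) m1
  simp only [Matrix.mul_assoc] at e
  rw [RA21_mul_RAinv21 k 𝒜 q hq, Matrix.mul_one] at e
  exact e.symm

lemma keyL1 (hq : q ≠ 0) (m1 : M1 k 𝒜 q A) (m3 : M3 k 𝒜 q A D) :
    (A ⊗ₖ (1 : Matrix (Fin m) (Fin m) 𝒜))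
        * (RA k 𝒜 q m * ((1 : Matrix (Fin m) (Fin m) 𝒜) ⊗ₖ (D * A)))
      = ((1 : Matrix (Fin n) (Fin n) 𝒜) ⊗ₖ (D * A))
          * ((A ⊗ₖ (1 : Matrix (Fin m) (Fin m) 𝒜)) * RAinv21 k 𝒜 q m)
        - (A ⊗ₖ (1 : Matrix (Fin m) (Fin m) 𝒜)) * flipA 𝒜 m m := by
  have e := congrArg (fun M => M * ((1 : Matrix (Fin m) (Fin m) 𝒜) ⊗ₖ A)) m3
  simp only [Matrix.add_mul, Matrix.mul_assoc] at e
  rw [show RAinv k 𝒜 q n * ((A ⊗ₖ (1 : Matrix (Fin n) (Fin n) 𝒜))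
        * ((1 : Matrix (Fin m) (Fin m) 𝒜) ⊗ₖ A))
      = ((1 : Matrix (Fin n) (Fin n) 𝒜) ⊗ₖ A)
          * ((A ⊗ₖ (1 : Matrix (Fin m) (Fin m) 𝒜)) * RAinv21 k 𝒜 q m) from ?_] at e
  · rw [Fleft' 𝒜 A, ← Matrix.mul_assoc ((1 : Matrix (Fin n) (Fin n) 𝒜) ⊗ₖ D),
      one_kron_mul, one_kron_mul] at e
    exact eq_sub_of_add_eq e.symm
  · rw [aux1 k 𝒜 q A hq m1, ← Matrix.mul_assoc, RAinv_mul_RA k 𝒜 q hq, Matrix.one_mul]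

lemma L1 (hq : q ≠ 0) (m1 : M1 k 𝒜 q A) (m3 : M3 k 𝒜 q A D) :
    (A ⊗ₖ (1 : Matrix (Fin m) (Fin m) 𝒜))
        * (RA k 𝒜 q m * ((1 : Matrix (Fin m) (Fin m) 𝒜)
            ⊗ₖ ((1 : Matrix (Fin m) (Fin m) 𝒜) + (q - q⁻¹) • (D * A))))
      = ((1 : Matrix (Fin n) (Fin n) 𝒜)
            ⊗ₖ ((1 : Matrix (Fin m) (Fin m) 𝒜) + (q - q⁻¹) • (D * A)))
          * ((A ⊗ₖ (1 : Matrix (Fin m) (Fin m) 𝒜)) * RAinv21 k 𝒜 q m) := by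
  rw [one_kron_add, one_kron_smul, one_kron_one, one_kron_add, one_kron_smul, one_kron_one]
  rw [Matrix.mul_add, Matrix.mul_one, Matrix.mul_smul, Matrix.mul_add, Matrix.mul_smul,
    Matrix.add_mul, Matrix.one_mul, Matrix.smul_mul]
  rw [keyL1 k 𝒜 q A D hq m1 m3, smul_sub, hecke1 k 𝒜 q m, Matrix.mul_add, Matrix.mul_smul]
  abel

lemma L1h (hq : q ≠ 0) (m1 : M1 k 𝒜 q A) (m3 : M3 k 𝒜 q A D)
    (h : Matrix (Fin m) (Fin m) 𝒜)
    (hinv₁ : ((1 : Matrix (Fin m) (Fin m) 𝒜) + (q - q⁻¹) • (D * A)) * h = 1)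
    (hinv₂ : h * ((1 : Matrix (Fin m) (Fin m) 𝒜) + (q - q⁻¹) • (D * A)) = 1) :
    ((1 : Matrix (Fin n) (Fin n) 𝒜) ⊗ₖ h)
        * ((A ⊗ₖ (1 : Matrix (Fin m) (Fin m) 𝒜)) * RA k 𝒜 q m)
      = (A ⊗ₖ (1 : Matrix (Fin m) (Fin m) 𝒜))
          * (RAinv21 k 𝒜 q m * ((1 : Matrix (Fin m) (Fin m) 𝒜) ⊗ₖ h)) := by
  have e := congrArg (fun M => ((1 : Matrix (Fin n) (Fin n) 𝒜) ⊗ₖ h)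
      * (M * ((1 : Matrix (Fin m) (Fin m) 𝒜) ⊗ₖ h))) (L1 k 𝒜 q A D hq m1 m3)
  simp only [Matrix.mul_assoc] at e
  rw [one_kron_mul, hinv₁, one_kron_one, Matrix.mul_one,
    ← Matrix.mul_assoc _ ((1 : Matrix (Fin n) (Fin n) 𝒜)
        ⊗ₖ ((1 : Matrix (Fin m) (Fin m) 𝒜) + (q - q⁻¹) • (D * A))),
    one_kron_mul, hinv₂, one_kron_one, Matrix.one_mul] at e
  exact e

lemma L1h' (hq : q ≠ 0) (m1 : M1 k 𝒜 q A) (m3 : M3 k 𝒜 q A D)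
    (h : Matrix (Fin m) (Fin m) 𝒜)
    (hinv₁ : ((1 : Matrix (Fin m) (Fin m) 𝒜) + (q - q⁻¹) • (D * A)) * h = 1)
    (hinv₂ : h * ((1 : Matrix (Fin m) (Fin m) 𝒜) + (q - q⁻¹) • (D * A)) = 1) :
    (h ⊗ₖ (1 : Matrix (Fin n) (Fin n) 𝒜))
        * (((1 : Matrix (Fin m) (Fin m) 𝒜) ⊗ₖ A) * RA21 k 𝒜 q m)
      = ((1 : Matrix (Fin m) (Fin m) 𝒜) ⊗ₖ A)
          * (RAinv k 𝒜 q m * (h ⊗ₖ (1 : Matrix (Fin m) (Fin m) 𝒜))) := by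
  have e := congrArg swp (L1h k 𝒜 q A D hq m1 m3 h hinv₁ hinv₂)
  simp only [swp_mul, swp_one_kron, swp_kron_one, swp_RA, swp_RAinv21] at e
  exact e

lemma aux2 (hq : q ≠ 0) (m2 : M2 k 𝒜 q D) :
    ((1 : Matrix (Fin m) (Fin m) 𝒜) ⊗ₖ D) * (D ⊗ₖ (1 : Matrix (Fin n) (Fin n) 𝒜))
      = RAinv k 𝒜 q m * ((D ⊗ₖ (1 : Matrix (Fin m) (Fin m) 𝒜))
          * (((1 : Matrix (Fin n) (Fin n) 𝒜) ⊗ₖ D) * RA21 k 𝒜 q n)) := by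
  have e := congrArg (fun M => RAinv k 𝒜 q m * M) m2
  simp only [Matrix.mul_assoc] at e
  rw [← Matrix.mul_assoc (RAinv k 𝒜 q m), RAinv_mul_RA k 𝒜 q hq, Matrix.one_mul] at e
  exact e

lemma keyL2 (hq : q ≠ 0) (m2 : M2 k 𝒜 q D) (m3 : M3 k 𝒜 q A D) :
    ((1 : Matrix (Fin m) (Fin m) 𝒜) ⊗ₖ (D * A))
        * (RA21 k 𝒜 q m * (D ⊗ₖ (1 : Matrix (Fin m) (Fin m) 𝒜)))
      = RAinv k 𝒜 q m * ((D ⊗ₖ (1 : Matrix (Fin m) (Fin m) 𝒜))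
            * ((1 : Matrix (Fin n) (Fin n) 𝒜) ⊗ₖ (D * A)))
        - flipA 𝒜 m m * (D ⊗ₖ (1 : Matrix (Fin m) (Fin m) 𝒜)) := by
  have e := congrArg (fun M => ((1 : Matrix (Fin m) (Fin m) 𝒜) ⊗ₖ D) * M)
    (M3swap k 𝒜 q A D m3)
  simp only [Matrix.mul_add, Matrix.mul_assoc] at e
  rw [← Matrix.mul_assoc _ (D ⊗ₖ (1 : Matrix (Fin n) (Fin n) 𝒜)), aux2 k 𝒜 q D hq m2] at e
  simp only [Matrix.mul_assoc] at e
  rw [← Matrix.mul_assoc (RA21 k 𝒜 q n), RA21_mul_RAinv21 k 𝒜 q hq, Matrix.one_mul,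
    one_kron_mul, ← Fleft 𝒜 D] at e
  rw [← Matrix.mul_assoc (((1 : Matrix (Fin m) (Fin m) 𝒜)) ⊗ₖ D), one_kron_mul] at e
  try simp only [Matrix.mul_assoc] at e
  exact eq_sub_of_add_eq e.symm

lemma L2 (hq : q ≠ 0) (m2 : M2 k 𝒜 q D) (m3 : M3 k 𝒜 q A D) :
    ((1 : Matrix (Fin m) (Fin m) 𝒜)
          ⊗ₖ ((1 : Matrix (Fin m) (Fin m) 𝒜) + (q - q⁻¹) • (D * A)))
        * (RA21 k 𝒜 q m * (D ⊗ₖ (1 : Matrix (Fin m) (Fin m) 𝒜)))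
      = RAinv k 𝒜 q m * ((D ⊗ₖ (1 : Matrix (Fin m) (Fin m) 𝒜))
          * ((1 : Matrix (Fin n) (Fin n) 𝒜)
              ⊗ₖ ((1 : Matrix (Fin m) (Fin m) 𝒜) + (q - q⁻¹) • (D * A)))) := by
  rw [one_kron_add, one_kron_smul, one_kron_one, one_kron_add, one_kron_smul, one_kron_one]
  rw [Matrix.add_mul, Matrix.one_mul, Matrix.smul_mul, Matrix.mul_add, Matrix.mul_one,
    Matrix.mul_smul, Matrix.mul_add, Matrix.mul_smul]
  rw [keyL2 k 𝒜 q A D hq m2 m3, smul_sub, hecke2 k 𝒜 q m, Matrix.add_mul, Matrix.smul_mul]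
  abel

lemma L2h (hq : q ≠ 0) (m2 : M2 k 𝒜 q D) (m3 : M3 k 𝒜 q A D)
    (h : Matrix (Fin m) (Fin m) 𝒜)
    (hinv₁ : ((1 : Matrix (Fin m) (Fin m) 𝒜) + (q - q⁻¹) • (D * A)) * h = 1)
    (hinv₂ : h * ((1 : Matrix (Fin m) (Fin m) 𝒜) + (q - q⁻¹) • (D * A)) = 1) :
    RA21 k 𝒜 q m * ((D ⊗ₖ (1 : Matrix (Fin m) (Fin m) 𝒜))
          * ((1 : Matrix (Fin n) (Fin n) 𝒜) ⊗ₖ h))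
      = ((1 : Matrix (Fin m) (Fin m) 𝒜) ⊗ₖ h)
          * (RAinv k 𝒜 q m * (D ⊗ₖ (1 : Matrix (Fin m) (Fin m) 𝒜))) := by
  have e := congrArg (fun M => ((1 : Matrix (Fin m) (Fin m) 𝒜) ⊗ₖ h)
      * (M * ((1 : Matrix (Fin n) (Fin n) 𝒜) ⊗ₖ h))) (L2 k 𝒜 q A D hq m2 m3)
  simp only [Matrix.mul_assoc] at e
  rw [one_kron_mul, hinv₁, one_kron_one, Matrix.mul_one,
    ← Matrix.mul_assoc ((1 : Matrix (Fin m) (Fin m) 𝒜) ⊗ₖ h)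
      ((1 : Matrix (Fin m) (Fin m) 𝒜)
        ⊗ₖ ((1 : Matrix (Fin m) (Fin m) 𝒜) + (q - q⁻¹) • (D * A))),
    one_kron_mul, hinv₂, one_kron_one, Matrix.one_mul] at e
  exact e

lemma hc (hq : q ≠ 0) :
    RA21 k 𝒜 q m * RA k 𝒜 q m
      = 1 + (q - q⁻¹) • (RA21 k 𝒜 q m * flipA 𝒜 m m) := by
  conv_lhs => rw [hecke1 k 𝒜 q m]
  rw [Matrix.mul_add, Matrix.mul_smul, RA21_mul_RAinv21 k 𝒜 q hq]

lemma hcext (hq : q ≠ 0) :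
    RA21 k 𝒜 q m * (RA k 𝒜 q m
        * (((1 : Matrix (Fin m) (Fin m) 𝒜) ⊗ₖ D)
            * ((1 : Matrix (Fin m) (Fin m) 𝒜) ⊗ₖ A)))
      = ((1 : Matrix (Fin m) (Fin m) 𝒜) ⊗ₖ D) * ((1 : Matrix (Fin m) (Fin m) 𝒜) ⊗ₖ A)
        + (q - q⁻¹) • (RA21 k 𝒜 q m * (flipA 𝒜 m m
            * (((1 : Matrix (Fin m) (Fin m) 𝒜) ⊗ₖ D)
                * ((1 : Matrix (Fin m) (Fin m) 𝒜) ⊗ₖ A)))) := by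
  have e := congrArg (fun M => M * (((1 : Matrix (Fin m) (Fin m) 𝒜) ⊗ₖ D)
      * ((1 : Matrix (Fin m) (Fin m) 𝒜) ⊗ₖ A))) (hc k 𝒜 q (m := m) hq)
  simp only [Matrix.add_mul, Matrix.smul_mul, Matrix.one_mul, Matrix.mul_assoc] at e
  exact e

lemma keyA (hq : q ≠ 0) (m2 : M2 k 𝒜 q D) (m3 : M3 k 𝒜 q A D) :
    RA21 k 𝒜 q m * ((D ⊗ₖ (1 : Matrix (Fin m) (Fin m) 𝒜))
        * ((A ⊗ₖ (1 : Matrix (Fin m) (Fin m) 𝒜))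
          * (RA k 𝒜 q m * (((1 : Matrix (Fin m) (Fin m) 𝒜) ⊗ₖ D)
              * ((1 : Matrix (Fin m) (Fin m) 𝒜) ⊗ₖ A)))))
      = ((1 : Matrix (Fin m) (Fin m) 𝒜) ⊗ₖ D) * ((D ⊗ₖ (1 : Matrix (Fin n) (Fin n) 𝒜))
          * ((A ⊗ₖ (1 : Matrix (Fin n) (Fin n) 𝒜)) * ((1 : Matrix (Fin m) (Fin m) 𝒜) ⊗ₖ A)))
        - RA21 k 𝒜 q m * (flipA 𝒜 m m
            * (((1 : Matrix (Fin m) (Fin m) 𝒜) ⊗ₖ D)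
                * ((1 : Matrix (Fin m) (Fin m) 𝒜) ⊗ₖ A))) := by
  have e := congrArg (fun M => M * ((1 : Matrix (Fin m) (Fin m) 𝒜) ⊗ₖ A)) m3
  simp only [Matrix.add_mul, Matrix.mul_assoc] at e
  have f := congrArg (fun M => RA21 k 𝒜 q m * ((D ⊗ₖ (1 : Matrix (Fin m) (Fin m) 𝒜)) * M)) e
  simp only [Matrix.mul_add, Matrix.mul_assoc] at f
  have m2e := congrArg (fun M => M * (RAinv k 𝒜 q n
      * ((A ⊗ₖ (1 : Matrix (Fin n) (Fin n) 𝒜)) * ((1 : Matrix (Fin m) (Fin m) 𝒜) ⊗ₖ A))))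
    (M2swap k 𝒜 q D m2)
  simp only [Matrix.mul_assoc] at m2e
  rw [← Matrix.mul_assoc (RA k 𝒜 q n), RA_mul_RAinv k 𝒜 q hq, Matrix.one_mul] at m2e
  rw [m2e] at f
  rw [← Matrix.mul_assoc (D ⊗ₖ (1 : Matrix (Fin m) (Fin m) 𝒜)) (flipA 𝒜 m n),
    ← Fleft' 𝒜 D, Matrix.mul_assoc] at f
  exact eq_sub_of_add_eq f.symm

lemma keyB (hq : q ≠ 0) (m1 : M1 k 𝒜 q A) (m3 : M3 k 𝒜 q A D) :
    ((1 : Matrix (Fin m) (Fin m) 𝒜) ⊗ₖ D) * (((1 : Matrix (Fin m) (Fin m) 𝒜) ⊗ₖ A)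
        * (RA21 k 𝒜 q m * ((D ⊗ₖ (1 : Matrix (Fin m) (Fin m) 𝒜))
            * ((A ⊗ₖ (1 : Matrix (Fin m) (Fin m) 𝒜)) * RA k 𝒜 q m))))
      = ((1 : Matrix (Fin m) (Fin m) 𝒜) ⊗ₖ D) * ((D ⊗ₖ (1 : Matrix (Fin n) (Fin n) 𝒜))
          * ((A ⊗ₖ (1 : Matrix (Fin n) (Fin n) 𝒜)) * ((1 : Matrix (Fin m) (Fin m) 𝒜) ⊗ₖ A)))
        - flipA 𝒜 m m * ((D ⊗ₖ (1 : Matrix (Fin m) (Fin m) 𝒜))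
            * ((A ⊗ₖ (1 : Matrix (Fin m) (Fin m) 𝒜)) * RA k 𝒜 q m)) := by
  have e := congrArg (fun M => ((1 : Matrix (Fin m) (Fin m) 𝒜) ⊗ₖ D)
      * (M * ((A ⊗ₖ (1 : Matrix (Fin m) (Fin m) 𝒜)) * RA k 𝒜 q m))) (M3swap k 𝒜 q A D m3)
  simp only [Matrix.add_mul, Matrix.mul_add, Matrix.mul_assoc] at e
  have m1e := congrArg (fun M => ((1 : Matrix (Fin m) (Fin m) 𝒜) ⊗ₖ D)
      * ((D ⊗ₖ (1 : Matrix (Fin n) (Fin n) 𝒜)) * (RAinv21 k 𝒜 q n * M))) (M1swap k 𝒜 q A m1)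
  simp only [Matrix.mul_assoc] at m1e
  rw [← Matrix.mul_assoc (RAinv21 k 𝒜 q n), RAinv21_mul_RA21 k 𝒜 q hq, Matrix.one_mul] at m1e
  rw [← m1e] at e
  rw [← Matrix.mul_assoc ((1 : Matrix (Fin m) (Fin m) 𝒜) ⊗ₖ D) (flipA 𝒜 n m),
    ← Fleft 𝒜 D, Matrix.mul_assoc] at e
  exact eq_sub_of_add_eq e.symm

lemma keyC (q : k) :
    flipA 𝒜 m m * ((D ⊗ₖ (1 : Matrix (Fin m) (Fin m) 𝒜))
        * ((A ⊗ₖ (1 : Matrix (Fin m) (Fin m) 𝒜)) * RA k 𝒜 q m))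
      = ((1 : Matrix (Fin m) (Fin m) 𝒜) ⊗ₖ D) * (((1 : Matrix (Fin m) (Fin m) 𝒜) ⊗ₖ A)
          * (RA21 k 𝒜 q m * flipA 𝒜 m m)) := by
  rw [← Matrix.mul_assoc, ← Matrix.mul_assoc, Fleft 𝒜 D,
    Matrix.mul_assoc ((1 : Matrix (Fin m) (Fin m) 𝒜) ⊗ₖ D), Fleft 𝒜 A]
  simp only [Matrix.mul_assoc]
  rw [flip_mul_swp 𝒜 (RA k 𝒜 q m), swp_RA]

lemma L3 (hq : q ≠ 0) (m1 : M1 k 𝒜 q A) (m2 : M2 k 𝒜 q D) (m3 : M3 k 𝒜 q A D) :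
    RA21 k 𝒜 q m * ((((1 : Matrix (Fin m) (Fin m) 𝒜) + (q - q⁻¹) • (D * A))
          ⊗ₖ (1 : Matrix (Fin m) (Fin m) 𝒜))
        * (RA k 𝒜 q m * ((1 : Matrix (Fin m) (Fin m) 𝒜)
            ⊗ₖ ((1 : Matrix (Fin m) (Fin m) 𝒜) + (q - q⁻¹) • (D * A)))))
      = ((1 : Matrix (Fin m) (Fin m) 𝒜)
            ⊗ₖ ((1 : Matrix (Fin m) (Fin m) 𝒜) + (q - q⁻¹) • (D * A)))
          * (RA21 k 𝒜 q m * ((((1 : Matrix (Fin m) (Fin m) 𝒜) + (q - q⁻¹) • (D * A))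
              ⊗ₖ (1 : Matrix (Fin m) (Fin m) 𝒜)) * RA k 𝒜 q m)) := by
  rw [kron_one_add, kron_one_smul, one_kron_add, one_kron_smul, one_kron_one]
  rw [← kron_one_mul, ← one_kron_mul]
  simp only [Matrix.mul_add, Matrix.add_mul, Matrix.mul_one, Matrix.one_mul,
    Matrix.smul_mul, Matrix.mul_smul, smul_add, smul_smul, Matrix.mul_assoc]
  rw [hcext k 𝒜 q A D hq, hc k 𝒜 q hq, keyA k 𝒜 q A D hq m2 m3, keyB k 𝒜 q A D hq m1 m3,
    keyC k 𝒜 A D q]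
  simp only [Matrix.mul_add, Matrix.mul_one, smul_add, smul_sub, Matrix.mul_smul, smul_smul]
  abel

section WithH

variable (h : Matrix (Fin m) (Fin m) 𝒜)

lemma commL3 (hq : q ≠ 0) (m1 : M1 k 𝒜 q A) (m2 : M2 k 𝒜 q D) (m3 : M3 k 𝒜 q A D)
    (hinv₁ : ((1 : Matrix (Fin m) (Fin m) 𝒜) + (q - q⁻¹) • (D * A)) * h = 1)
    (hinv₂ : h * ((1 : Matrix (Fin m) (Fin m) 𝒜) + (q - q⁻¹) • (D * A)) = 1) :
    ((1 : Matrix (Fin m) (Fin m) 𝒜) ⊗ₖ h)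
        * (RA21 k 𝒜 q m * ((((1 : Matrix (Fin m) (Fin m) 𝒜) + (q - q⁻¹) • (D * A))
            ⊗ₖ (1 : Matrix (Fin m) (Fin m) 𝒜)) * RA k 𝒜 q m))
      = RA21 k 𝒜 q m * ((((1 : Matrix (Fin m) (Fin m) 𝒜) + (q - q⁻¹) • (D * A))
            ⊗ₖ (1 : Matrix (Fin m) (Fin m) 𝒜))
          * (RA k 𝒜 q m * ((1 : Matrix (Fin m) (Fin m) 𝒜) ⊗ₖ h))) := by
  have e := congrArg (fun M => ((1 : Matrix (Fin m) (Fin m) 𝒜) ⊗ₖ h)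
      * (M * ((1 : Matrix (Fin m) (Fin m) 𝒜) ⊗ₖ h))) (L3 k 𝒜 q A D hq m1 m2 m3)
  simp only [Matrix.mul_assoc] at e
  rw [one_kron_mul, hinv₁, one_kron_one, Matrix.mul_one,
    ← Matrix.mul_assoc ((1 : Matrix (Fin m) (Fin m) 𝒜) ⊗ₖ h)
      ((1 : Matrix (Fin m) (Fin m) 𝒜)
        ⊗ₖ ((1 : Matrix (Fin m) (Fin m) 𝒜) + (q - q⁻¹) • (D * A))),
    one_kron_mul, hinv₂, one_kron_one, Matrix.one_mul] at e
  exact e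

lemma E2 (hq : q ≠ 0) (m1 : M1 k 𝒜 q A) (m2 : M2 k 𝒜 q D) (m3 : M3 k 𝒜 q A D)
    (hinv₁ : ((1 : Matrix (Fin m) (Fin m) 𝒜) + (q - q⁻¹) • (D * A)) * h = 1)
    (hinv₂ : h * ((1 : Matrix (Fin m) (Fin m) 𝒜) + (q - q⁻¹) • (D * A)) = 1) :
    (h ⊗ₖ (1 : Matrix (Fin m) (Fin m) 𝒜)) * (RAinv21 k 𝒜 q m
        * (((1 : Matrix (Fin m) (Fin m) 𝒜) ⊗ₖ h) * RA21 k 𝒜 q m))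
      = RA k 𝒜 q m * (((1 : Matrix (Fin m) (Fin m) 𝒜) ⊗ₖ h)
          * (RAinv k 𝒜 q m * (h ⊗ₖ (1 : Matrix (Fin m) (Fin m) 𝒜)))) := by
  have e := congrArg (fun M => RAinv21 k 𝒜 q m * (M * RAinv k 𝒜 q m))
    (commL3 k 𝒜 q A D h hq m1 m2 m3 hinv₁ hinv₂)
  simp only [Matrix.mul_assoc] at e
  rw [RA_mul_RAinv k 𝒜 q hq, Matrix.mul_one,
    ← Matrix.mul_assoc (RAinv21 k 𝒜 q m) (RA21 k 𝒜 q m),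
    RAinv21_mul_RA21 k 𝒜 q hq, Matrix.one_mul] at e
  have f := congrArg (fun M => (h ⊗ₖ (1 : Matrix (Fin m) (Fin m) 𝒜))
      * (M * (h ⊗ₖ (1 : Matrix (Fin m) (Fin m) 𝒜)))) e
  simp only [Matrix.mul_assoc] at f
  rw [kron_one_mul, hinv₁, one_kron_one, Matrix.mul_one,
    ← Matrix.mul_assoc (h ⊗ₖ (1 : Matrix (Fin m) (Fin m) 𝒜))
      ((((1 : Matrix (Fin m) (Fin m) 𝒜) + (q - q⁻¹) • (D * A)))
        ⊗ₖ (1 : Matrix (Fin m) (Fin m) 𝒜)),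
    kron_one_mul, hinv₂, one_kron_one, Matrix.one_mul] at f
  exact f

lemma Th (hq : q ≠ 0) (m1 : M1 k 𝒜 q A) (m2 : M2 k 𝒜 q D) (m3 : M3 k 𝒜 q A D)
    (hinv₁ : ((1 : Matrix (Fin m) (Fin m) 𝒜) + (q - q⁻¹) • (D * A)) * h = 1)
    (hinv₂ : h * ((1 : Matrix (Fin m) (Fin m) 𝒜) + (q - q⁻¹) • (D * A)) = 1) :
    ((1 : Matrix (Fin m) (Fin m) 𝒜) ⊗ₖ h)
        * (RAinv k 𝒜 q m * (h ⊗ₖ (1 : Matrix (Fin m) (Fin m) 𝒜)))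
      = RAinv k 𝒜 q m * ((h ⊗ₖ (1 : Matrix (Fin m) (Fin m) 𝒜))
          * (RAinv21 k 𝒜 q m * (((1 : Matrix (Fin m) (Fin m) 𝒜) ⊗ₖ h) * RA21 k 𝒜 q m))) := by
  have e := congrArg (fun M => RAinv k 𝒜 q m * M)
    (E2 k 𝒜 q A D h hq m1 m2 m3 hinv₁ hinv₂)
  simp only [Matrix.mul_assoc] at e
  rw [← Matrix.mul_assoc (RAinv k 𝒜 q m) (RA k 𝒜 q m), RAinv_mul_RA k 𝒜 q hq,
    Matrix.one_mul] at e
  exact e.symm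

end WithH

section Assemble

variable (h : Matrix (Fin m) (Fin m) 𝒜)

lemma C2pos (hq : q ≠ 0) (m1 : M1 k 𝒜 q A) (m2 : M2 k 𝒜 q D) (m3 : M3 k 𝒜 q A D)
    (hinv₁ : ((1 : Matrix (Fin m) (Fin m) 𝒜) + (q - q⁻¹) • (D * A)) * h = 1)
    (hinv₂ : h * ((1 : Matrix (Fin m) (Fin m) 𝒜) + (q - q⁻¹) • (D * A)) = 1) :
    RA k 𝒜 q n * (((1 : Matrix (Fin n) (Fin n) 𝒜) ⊗ₖ (A * h))
        * ((A * h) ⊗ₖ (1 : Matrix (Fin m) (Fin m) 𝒜)))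
      = ((A * h) ⊗ₖ (1 : Matrix (Fin n) (Fin n) 𝒜))
          * (((1 : Matrix (Fin m) (Fin m) 𝒜) ⊗ₖ (A * h)) * RA21 k 𝒜 q m) := by
  rw [← one_kron_mul, ← one_kron_mul, ← kron_one_mul, ← kron_one_mul]
  simp only [Matrix.mul_assoc]
  have hA2 := congrArg (fun M => M * (RAinv k 𝒜 q m
      * (h ⊗ₖ (1 : Matrix (Fin m) (Fin m) 𝒜)))) (L1h k 𝒜 q A D hq m1 m3 h hinv₁ hinv₂)
  simp only [Matrix.mul_assoc] at hA2
  rw [← Matrix.mul_assoc (RA k 𝒜 q m) (RAinv k 𝒜 q m), RA_mul_RAinv k 𝒜 q hq,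
    Matrix.one_mul] at hA2
  rw [hA2]
  have m1e := congrArg (fun M => M * (RAinv21 k 𝒜 q m
      * (((1 : Matrix (Fin m) (Fin m) 𝒜) ⊗ₖ h)
        * (RAinv k 𝒜 q m * (h ⊗ₖ (1 : Matrix (Fin m) (Fin m) 𝒜)))))) m1
  simp only [Matrix.mul_assoc] at m1e
  rw [← Matrix.mul_assoc (RA21 k 𝒜 q m) (RAinv21 k 𝒜 q m), RA21_mul_RAinv21 k 𝒜 q hq,
    Matrix.one_mul] at m1e
  rw [m1e, Th k 𝒜 q A D h hq m1 m2 m3 hinv₁ hinv₂]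
  have hA2' := congrArg (fun M => M * (RAinv21 k 𝒜 q m
      * (((1 : Matrix (Fin m) (Fin m) 𝒜) ⊗ₖ h) * RA21 k 𝒜 q m)))
    (L1h' k 𝒜 q A D hq m1 m3 h hinv₁ hinv₂)
  simp only [Matrix.mul_assoc] at hA2'
  rw [← Matrix.mul_assoc (RA21 k 𝒜 q m) (RAinv21 k 𝒜 q m), RA21_mul_RAinv21 k 𝒜 q hq,
    Matrix.one_mul] at hA2'
  rw [hA2']

lemma claim3 (hq : q ≠ 0) (m3 : M3 k 𝒜 q A D) :
    (D ⊗ₖ (1 : Matrix (Fin n) (Fin n) 𝒜)) * (RA k 𝒜 q n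
        * ((1 : Matrix (Fin n) (Fin n) 𝒜) ⊗ₖ A))
      = ((1 : Matrix (Fin m) (Fin m) 𝒜) ⊗ₖ A)
            * (RA21 k 𝒜 q m * (D ⊗ₖ (1 : Matrix (Fin m) (Fin m) 𝒜)))
          + flipA 𝒜 n m * ((1 : Matrix (Fin n) (Fin n) 𝒜)
              ⊗ₖ ((1 : Matrix (Fin m) (Fin m) 𝒜) + (q - q⁻¹) • (D * A))) := by
  have e := M3swap k 𝒜 q A D m3
  simp only [Matrix.mul_assoc] at e
  rw [hecke1 k 𝒜 q n, Matrix.add_mul, Matrix.smul_mul, Matrix.mul_add, Matrix.mul_smul, e,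
    ← Matrix.mul_assoc (D ⊗ₖ (1 : Matrix (Fin n) (Fin n) 𝒜)) (flipA 𝒜 n n),
    ← Fleft' 𝒜 D, Matrix.mul_assoc, one_kron_mul,
    one_kron_add, one_kron_smul, one_kron_one, Matrix.mul_add, Matrix.mul_one,
    Matrix.mul_smul]
  abel

lemma C3' (hq : q ≠ 0) (m2 : M2 k 𝒜 q D) (m3 : M3 k 𝒜 q A D)
    (hinv₁ : ((1 : Matrix (Fin m) (Fin m) 𝒜) + (q - q⁻¹) • (D * A)) * h = 1)
    (hinv₂ : h * ((1 : Matrix (Fin m) (Fin m) 𝒜) + (q - q⁻¹) • (D * A)) = 1) :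
    (D ⊗ₖ (1 : Matrix (Fin n) (Fin n) 𝒜)) * (RA k 𝒜 q n
        * ((1 : Matrix (Fin n) (Fin n) 𝒜) ⊗ₖ (A * h)))
      = ((1 : Matrix (Fin m) (Fin m) 𝒜) ⊗ₖ (A * h))
            * (RAinv k 𝒜 q m * (D ⊗ₖ (1 : Matrix (Fin m) (Fin m) 𝒜)))
          + flipA 𝒜 n m := by
  have e := congrArg (fun M => M * ((1 : Matrix (Fin n) (Fin n) 𝒜) ⊗ₖ h))
    (claim3 k 𝒜 q A D hq m3)
  simp only [Matrix.add_mul, Matrix.mul_assoc] at e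
  rw [one_kron_mul, one_kron_mul, hinv₁, one_kron_one, Matrix.mul_one] at e
  rw [L2h k 𝒜 q A D hq m2 m3 h hinv₁ hinv₂,
    ← Matrix.mul_assoc ((1 : Matrix (Fin m) (Fin m) 𝒜) ⊗ₖ A)
      ((1 : Matrix (Fin m) (Fin m) 𝒜) ⊗ₖ h), one_kron_mul] at e
  exact e

end Assemble

end Main

/-- Given matrices `A` (n × m) and `D` (m × n) over `𝒜` satisfying the
defining relations of the quantized edge algebra `𝒟_q(e)` with tail dimension `n` and
head dimension `m`, suppose in addition that `g := I_m + (q - q⁻¹) D A` is invertible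
in `Mat_m(𝒜)` (with two-sided inverse `h`).  Then the pair `A' := D` and
`D' := -A g⁻¹` satisfies the defining relations of the quantized edge algebra of the
reversed edge, with tail dimension `m` and head dimension `n`.  (This is the content
of the q-Fourier transform `ℱ : 𝒟_q(e)° → 𝒟_q(e^∨)°`, `A ↦ D`, `D ↦ -A g⁻¹`, for a
non-loop edge.) -/
theorem edge_fourier_transform (q : k) (hq : q ≠ 0) {n m : ℕ}
    (A : Matrix (Fin n) (Fin m) 𝒜) (D : Matrix (Fin m) (Fin n) 𝒜)
    (hrel : EdgeRel k 𝒜 q A D)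
    (h : Matrix (Fin m) (Fin m) 𝒜)
    (hinv₁ : ((1 : Matrix (Fin m) (Fin m) 𝒜) + (q - q⁻¹) • (D * A)) * h = 1)
    (hinv₂ : h * ((1 : Matrix (Fin m) (Fin m) 𝒜) + (q - q⁻¹) • (D * A)) = 1) :
    EdgeRel k 𝒜 q D (-(A * h)) := by
  obtain ⟨m1, m2, m3⟩ := hrel
  refine ⟨m2, ?_, ?_⟩
  · rw [one_kron_neg, one_kron_neg, kron_one_neg, kron_one_neg]
    simp only [Matrix.mul_neg, Matrix.neg_mul, neg_neg, Matrix.mul_assoc]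
    exact C2pos k 𝒜 q A D h hq m1 m2 m3 hinv₁ hinv₂
  · rw [one_kron_neg, one_kron_neg]
    simp only [Matrix.mul_neg, Matrix.neg_mul, Matrix.mul_assoc]
    rw [C3' k 𝒜 q A D h hq m2 m3 hinv₁ hinv₂]
    abel
end
end
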